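/- Let L be a finite-dimensional anti-commutative algebra over a field such that Aut(L) acts irreducibly on L. Then L is isomorphic to a direct sum I ⊕ ⋯ ⊕ I of ℓ copies of a simple anti-commutative algebra I whose automorphism group acts irreducibly on I. Moreover, if L is non-abelian, then ℓ equals the number of minimal ideals of L. -/

import Mathlib

/-!
The centre `ker mul` and the span of the `Aut(L)`-translates of a nonzero subspace are
`Aut(L)`-invariant, so for non-abelian `L` the centre vanishes and the translates of a minimal
ideal `I` span `L`. Distinct minimal ideals meet trivially, hence multiply to zero by
anti-commutativity; with trivial centre this forces every minimal ideal to be a translate `σ I`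
and the minimal ideals to be independent, so `L = ⨁_K σ_K I` is an algebra direct sum indexed by
the minimal ideals. An ideal of `I` is then an ideal of `L`, so `I` is simple. A nonzero
`Aut(I)`-invariant `W ≤ I` is fixed by every automorphism stabilising `I`, so all translates of `W`
lie in `W ⊕ ⨁_{K ≠ I} K`; as they span `L`, the modular law gives `W = I`.
An abelian `L` is the direct sum of `dim L` lines.
-/

variable {F L : Type*} [Field F] [AddCommGroup L] [Module F L]

/-- A linear automorphism of `L` preserving the product `mul`. -/
def IsMulAut (mul : L →ₗ[F] L →ₗ[F] L) (e : L ≃ₗ[F] L) : Prop :=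
  ∀ x y : L, e (mul x y) = mul (e x) (e y)

/-- `Aut(L)` acts irreducibly on `L`. -/
def IsIrredAlg (mul : L →ₗ[F] L →ₗ[F] L) : Prop :=
  ∀ W : Submodule F L,
    (∀ e : L ≃ₗ[F] L, IsMulAut mul e → W.map (e : L →ₗ[F] L) = W) → W = ⊥ ∨ W = ⊤

/-- An ideal of the anti-commutative algebra `(L, mul)`. -/
def IsAlgIdeal (mul : L →ₗ[F] L →ₗ[F] L) (W : Submodule F L) : Prop :=
  ∀ x ∈ W, ∀ y : L, mul x y ∈ W

/-- A minimal (non-zero) ideal. -/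
def IsMinIdeal (mul : L →ₗ[F] L →ₗ[F] L) (I : Submodule F L) : Prop :=
  IsAlgIdeal mul I ∧ I ≠ ⊥ ∧ ∀ J : Submodule F L, IsAlgIdeal mul J → J ≤ I → J = ⊥ ∨ J = I

theorem Submodule.map_eq_of_forall_map_le {R M : Type*} [Semiring R] [AddCommMonoid M]
    [Module R M] {G : Subgroup (M ≃ₗ[R] M)} {W : Submodule R M}
    (hW : ∀ e ∈ G, W.map (e : M →ₗ[R] M) ≤ W) {e : M ≃ₗ[R] M} (he : e ∈ G) :
    W.map (e : M →ₗ[R] M) = W := by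
  refine le_antisymm (hW e he) ?_
  calc W = (W.map (e.symm : M →ₗ[R] M)).map (e : M →ₗ[R] M) := by simp [← Submodule.map_comp]
    _ ≤ W.map (e : M →ₗ[R] M) := Submodule.map_mono (hW _ (G.inv_mem he))

theorem Submodule.eq_bot_or_eq_of_le_of_finrank_le_one {K V : Type*} [DivisionRing K]
    [AddCommGroup V] [Module K V] [FiniteDimensional K V] {J I : Submodule K V}
    (hI : Module.finrank K I ≤ 1) (hJI : J ≤ I) : J = ⊥ ∨ J = I := by
  rcases Nat.le_one_iff_eq_zero_or_eq_one.mp ((Submodule.finrank_mono hJI).trans hI) with h | h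
  · exact .inl (Submodule.finrank_eq_zero.mp h)
  · exact .inr (Submodule.eq_of_le_of_finrank_le hJI (h ▸ hI))

theorem LinearMap.apply_swap_eq_neg {R M N : Type*} [CommSemiring R] [AddCommMonoid M]
    [AddCommGroup N] [Module R M] [Module R N] (B : M →ₗ[R] M →ₗ[R] N) (hB : ∀ x, B x x = 0)
    (x y : M) : -B y x = B x y := by
  have h := hB (x + y)
  simp only [map_add, LinearMap.add_apply, hB, zero_add, add_zero] at h
  exact (eq_neg_of_add_eq_zero_right h).symm

section

variable {mul : L →ₗ[F] L →ₗ[F] L}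

variable (mul) in
def mulAutGroup : Subgroup (L ≃ₗ[F] L) where
  carrier := {e | IsMulAut mul e}
  mul_mem' {e f} he hf x y := by simp only [LinearEquiv.mul_apply, hf x y, he (f x) (f y)]
  one_mem' _ _ := rfl
  inv_mem' {e} he x y := e.injective <| by
    rw [he (e⁻¹ x) (e⁻¹ y)]
    simp only [← LinearEquiv.mul_apply, mul_inv_cancel]
    rfl

theorem IsAlgIdeal.map {I : Submodule F L} (hI : IsAlgIdeal mul I) {e : L ≃ₗ[F] L}
    (he : e ∈ mulAutGroup mul) : IsAlgIdeal mul (I.map (e : L →ₗ[F] L)) := by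
  rintro _ ⟨x, hx, rfl⟩ y
  refine ⟨mul x (e.symm y), hI x hx _, ?_⟩
  rw [LinearEquiv.coe_coe, he x, e.apply_symm_apply]

theorem IsAlgIdeal.inf {I J : Submodule F L} (hI : IsAlgIdeal mul I) (hJ : IsAlgIdeal mul J) :
    IsAlgIdeal mul (I ⊓ J) :=
  fun x hx y => ⟨hI x hx.1 y, hJ x hx.2 y⟩

theorem isAlgIdeal_sSup {s : Set (Submodule F L)} (hs : ∀ I ∈ s, IsAlgIdeal mul I) :
    IsAlgIdeal mul (sSup s) := by
  have : sSup s ≤ ⨅ y, (sSup s).comap (mul.flip y) := sSup_le fun I hI x hx =>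
    (Submodule.mem_iInf _).2 fun y => Submodule.mem_sSup_of_mem hI (hs I hI x hx y)
  exact fun x hx y => (Submodule.mem_iInf _).1 (this hx) y

theorem IsMinIdeal.map {I : Submodule F L} (hI : IsMinIdeal mul I) {e : L ≃ₗ[F] L}
    (he : e ∈ mulAutGroup mul) : IsMinIdeal mul (I.map (e : L →ₗ[F] L)) := by
  refine ⟨hI.1.map he, Submodule.map_ne_bot_iff.2 hI.2.1, fun J hJ hJI => ?_⟩
  have hJI' : J.map (e.symm : L →ₗ[F] L) ≤ I := by
    simpa [← Submodule.map_comp] using Submodule.map_mono (f := (e.symm : L →ₗ[F] L)) hJI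
  have hJ_eq : (J.map (e.symm : L →ₗ[F] L)).map (e : L →ₗ[F] L) = J := by
    simp [← Submodule.map_comp]
  have he' : e.symm ∈ mulAutGroup mul := (mulAutGroup mul).inv_mem he
  rcases hI.2.2 _ (hJ.map he') hJI' with h | h
  · exact .inl (by rw [← hJ_eq, h, Submodule.map_bot])
  · exact .inr (by rw [← hJ_eq, h])

theorem IsMinIdeal.disjoint {I J : Submodule F L} (hI : IsMinIdeal mul I) (hJ : IsMinIdeal mul J)
    (hIJ : I ≠ J) : Disjoint I J := by
  rw [disjoint_iff]
  refine (hI.2.2 _ (hI.1.inf hJ.1) inf_le_left).resolve_right fun h => hIJ ?_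
  exact (hJ.2.2 I hI.1 (inf_eq_left.1 h)).resolve_left hI.2.1

theorem IsMinIdeal.mul_eq_zero (halt : ∀ x : L, mul x x = 0) {I J : Submodule F L}
    (hI : IsMinIdeal mul I) (hJ : IsMinIdeal mul J) (hIJ : I ≠ J) {x y : L} (hx : x ∈ I)
    (hy : y ∈ J) : mul x y = 0 := by
  refine (Submodule.disjoint_def.1 (hI.disjoint hJ hIJ)) _ (hI.1 x hx y) ?_
  rw [← mul.apply_swap_eq_neg halt]
  exact J.neg_mem (hJ.1 y hy x)

theorem IsIrredAlg.eq_bot_or_eq_top_of_map_le (hirr : IsIrredAlg mul) {W : Submodule F L}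
    (hW : ∀ e ∈ mulAutGroup mul, W.map (e : L →ₗ[F] L) ≤ W) : W = ⊥ ∨ W = ⊤ :=
  hirr W fun _ he => Submodule.map_eq_of_forall_map_le hW he

theorem IsIrredAlg.ker_eq_bot (hirr : IsIrredAlg mul) (hmul : mul ≠ 0) :
    LinearMap.ker mul = ⊥ := by
  refine (hirr.eq_bot_or_eq_top_of_map_le ?_).resolve_right fun h => hmul (LinearMap.ker_eq_top.1 h)
  rintro e he _ ⟨x, hx, rfl⟩
  rw [SetLike.mem_coe, LinearMap.mem_ker] at hx
  rw [LinearMap.mem_ker]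
  ext y
  rw [LinearEquiv.coe_coe, ← e.apply_symm_apply y, ← he, hx, LinearMap.zero_apply, map_zero,
    LinearMap.zero_apply]

theorem IsIrredAlg.iSup_map_eq_top (hirr : IsIrredAlg mul) {W : Submodule F L} (hW : W ≠ ⊥) :
    ⨆ e : mulAutGroup mul, W.map (e : L →ₗ[F] L) = ⊤ := by
  refine (hirr.eq_bot_or_eq_top_of_map_le fun e he => ?_).resolve_left fun h => hW ?_
  · rw [Submodule.map_iSup]
    refine iSup_le fun f => ?_
    rw [← Submodule.map_comp]
    exact le_iSup_of_le ⟨e * f, mul_mem he f.2⟩ le_rfl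
  · have := le_iSup (fun e : mulAutGroup mul => W.map (e : L →ₗ[F] L)) 1
    simpa [h] using this

theorem exists_isMinIdeal [FiniteDimensional F L] [Nontrivial L] (mul : L →ₗ[F] L →ₗ[F] L) :
    ∃ I, IsMinIdeal mul I := by
  obtain ⟨I, ⟨hI, hI0⟩, hmin⟩ := wellFounded_lt.has_min
    {I : Submodule F L | IsAlgIdeal mul I ∧ I ≠ ⊥} ⟨⊤, fun _ _ _ => trivial, top_ne_bot⟩
  exact ⟨I, hI, hI0, fun J hJ hJI =>
    or_iff_not_imp_left.2 fun hJ0 => hJI.eq_of_not_lt (hmin J ⟨hJ, hJ0⟩)⟩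

theorem IsMinIdeal.mul_eq_zero_of_mem_sSup (halt : ∀ x : L, mul x x = 0) {K : Submodule F L}
    (hK : IsMinIdeal mul K) {s : Set (Submodule F L)} (hs : ∀ J ∈ s, IsMinIdeal mul J)
    (hKs : K ∉ s) {x y : L} (hx : x ∈ K) (hy : y ∈ sSup s) : mul x y = 0 := by
  have : sSup s ≤ LinearMap.ker (mul x) := sSup_le fun J hJ _ hz =>
    hK.mul_eq_zero halt (hs J hJ) (fun h => hKs (h ▸ hJ)) hx hz
  exact this hy

theorem IsMinIdeal.mem_of_sSup_eq_top (halt : ∀ x : L, mul x x = 0)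
    (hZ : LinearMap.ker mul = ⊥) {s : Set (Submodule F L)} (hs : ∀ J ∈ s, IsMinIdeal mul J)
    (htop : sSup s = ⊤) {K : Submodule F L} (hK : IsMinIdeal mul K) : K ∈ s := by
  by_contra hKs
  obtain ⟨x, hx, hx0⟩ := Submodule.exists_mem_ne_zero_of_ne_bot hK.2.1
  refine hx0 ((Submodule.mem_bot F).1 (hZ ▸ LinearMap.mem_ker.2 ?_))
  ext y
  exact hK.mul_eq_zero_of_mem_sSup halt hs hKs hx (htop ▸ Submodule.mem_top)

theorem sSupIndep_of_sSup_eq_top (halt : ∀ x : L, mul x x = 0) (hZ : LinearMap.ker mul = ⊥)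
    {s : Set (Submodule F L)} (hs : ∀ J ∈ s, IsMinIdeal mul J) (htop : sSup s = ⊤) :
    sSupIndep s := by
  intro K hK
  have hT : IsAlgIdeal mul (sSup (s \ {K})) := isAlgIdeal_sSup fun J hJ => (hs J hJ.1).1
  rw [disjoint_iff]
  refine ((hs K hK).2.2 _ ((hs K hK).1.inf hT) inf_le_left).resolve_right fun h => ?_
  have htop' : sSup (s \ {K}) = ⊤ := by
    refine eq_top_iff.2 (htop ▸ sSup_le fun J hJ => ?_)
    by_cases hJK : J = K
    · rw [hJK]
      exact inf_eq_left.1 h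
    · exact le_sSup ⟨hJ, hJK⟩
  exact ((hs K hK).mem_of_sSup_eq_top halt hZ (fun J hJ => hs J hJ.1) htop').2 rfl

theorem IsIrredAlg.sSup_isMinIdeal_eq_top (hirr : IsIrredAlg mul) {I : Submodule F L}
    (hI : IsMinIdeal mul I) : sSup {K | IsMinIdeal mul K} = ⊤ :=
  eq_top_iff.2 <| (hirr.iSup_map_eq_top hI.2.1).ge.trans <| iSup_le fun e => le_sSup (hI.map e.2)

theorem IsMinIdeal.exists_map_eq (halt : ∀ x : L, mul x x = 0) (hirr : IsIrredAlg mul)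
    (hZ : LinearMap.ker mul = ⊥) {I K : Submodule F L} (hI : IsMinIdeal mul I)
    (hK : IsMinIdeal mul K) : ∃ e ∈ mulAutGroup mul, I.map (e : L →ₗ[F] L) = K := by
  have hK_mem := hK.mem_of_sSup_eq_top halt hZ
    (s := Set.range fun e : mulAutGroup mul => I.map (e : L →ₗ[F] L))
    (by rintro _ ⟨e, rfl⟩; exact hI.map e.2) (by rw [sSup_range]; exact hirr.iSup_map_eq_top hI.2.1)
  obtain ⟨e, rfl⟩ := hK_mem
  exact ⟨e, e.2, rfl⟩

theorem IsMinIdeal.eq_bot_or_eq_of_le (halt : ∀ x : L, mul x x = 0)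
    (htop : sSup {K | IsMinIdeal mul K} = ⊤) {I J : Submodule F L} (hI : IsMinIdeal mul I)
    (hJI : J ≤ I) (hJ : ∀ x ∈ J, ∀ y ∈ I, mul x y ∈ J) : J = ⊥ ∨ J = I := by
  refine hI.2.2 J (fun x hx y => ?_) hJI
  have : sSup {K | IsMinIdeal mul K} ≤ J.comap (mul x) := sSup_le fun K hK z hz => by
    by_cases hKI : K = I
    · exact hJ x hx z (hKI ▸ hz)
    · rw [Submodule.mem_comap, hI.mul_eq_zero halt hK (Ne.symm hKI) (hJI hx) hz]
      exact J.zero_mem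
  exact this (htop ▸ Submodule.mem_top)

theorem IsMinIdeal.eq_of_le_of_forall_map_eq (hirr : IsIrredAlg mul)
    (hind : sSupIndep {K | IsMinIdeal mul K}) {I V : Submodule F L} (hI : IsMinIdeal mul I)
    (hVI : V ≤ I) (hV : V ≠ ⊥)
    (hVinv : ∀ p ∈ mulAutGroup mul, I.map (p : L →ₗ[F] L) = I → V.map (p : L →ₗ[F] L) = V) :
    V = I := by
  set C := sSup ({K | IsMinIdeal mul K} \ {I})
  have hcover : ⊤ ≤ V ⊔ C := by
    rw [← hirr.iSup_map_eq_top hV]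
    refine iSup_le fun p => ?_
    by_cases hpI : I.map (p : L →ₗ[F] L) = I
    · exact le_sup_of_le_left (hVinv p p.2 hpI).le
    · exact le_sup_of_le_right (le_sSup_of_le ⟨hI.map p.2, hpI⟩ (Submodule.map_mono hVI))
  calc V = V ⊔ C ⊓ I := by rw [inf_comm, (hind hI).eq_bot, sup_bot_eq]
    _ = (V ⊔ C) ⊓ I := (sup_inf_assoc_of_le _ hVI).symm
    _ = I := by rw [top_le_iff.1 hcover, top_inf_eq]

theorem IsMinIdeal.eq_bot_or_eq_top_of_forall_map_eq (hirr : IsIrredAlg mul)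
    (hind : sSupIndep {K | IsMinIdeal mul K}) {I : Submodule F L} (hI : IsMinIdeal mul I)
    (hcl : ∀ x ∈ I, ∀ y ∈ I, mul x y ∈ I) {W : Submodule F I}
    (hW : ∀ e : I ≃ₗ[F] I,
      (∀ x y : I, ((e ⟨mul x y, hcl _ x.2 _ y.2⟩ : I) : L) = mul (e x) (e y)) →
      W.map (e : I →ₗ[F] I) = W) :
    W = ⊥ ∨ W = ⊤ := by
  have hmap_inj := Submodule.map_injective_of_injective I.injective_subtype
  refine or_iff_not_imp_left.2 fun hW0 => hmap_inj ?_
  rw [Submodule.map_subtype_top]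
  refine hI.eq_of_le_of_forall_map_eq hirr hind (Submodule.map_subtype_le I W)
    ((hmap_inj.ne_iff' (Submodule.map_bot _)).2 hW0) fun p hp hpI => ?_
  conv_rhs => rw [← hW (p.ofSubmodules I I hpI) fun x y => hp x y]
  rw [← Submodule.map_comp, ← Submodule.map_comp]
  rfl

section SumMap

variable {ι : Type*} [Fintype ι]

def sumMap (I : Submodule F L) (σ : ι → L ≃ₗ[F] L) : (ι → I) →ₗ[F] L :=
  ∑ i, (σ i : L →ₗ[F] L) ∘ₗ I.subtype ∘ₗ LinearMap.proj i

@[simp]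
theorem sumMap_apply (I : Submodule F L) (σ : ι → L ≃ₗ[F] L) (f : ι → I) :
    sumMap I σ f = ∑ i, σ i (f i) := by
  simp [sumMap]

theorem sumMap_bijective {I : Submodule F L} {σ : ι → L ≃ₗ[F] L}
    (hind : iSupIndep fun i => I.map (σ i : L →ₗ[F] L))
    (htop : ⨆ i, I.map (σ i : L →ₗ[F] L) = ⊤) : Function.Bijective (sumMap I σ) := by
  classical
  refine ⟨(injective_iff_map_eq_zero _).2 fun f hf => funext fun i => ?_, ?_⟩
  · have := (iSupIndep_iff_finsetSum_eq_zero_imp_eq_zero _).1 hind Finset.univ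
      (fun i => σ i (f i)) (fun i _ => ⟨f i, (f i).2, rfl⟩) (by simpa using hf) i
      (Finset.mem_univ i)
    simpa using this
  · rw [← LinearMap.range_eq_top, eq_top_iff, ← htop]
    refine iSup_le fun i => ?_
    rintro _ ⟨x, hx, rfl⟩
    refine ⟨Pi.single i ⟨x, hx⟩, ?_⟩
    rw [sumMap_apply, Finset.sum_eq_single i (fun j _ hj => by simp [Pi.single_eq_of_ne hj])
      (by simp)]
    simp

theorem sumMap_mul (halt : ∀ x : L, mul x x = 0) {I : Submodule F L} (hI : IsMinIdeal mul I)
    {σ : ι → L ≃ₗ[F] L} (hσ : ∀ i, σ i ∈ mulAutGroup mul)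
    (hinj : Function.Injective fun i => I.map (σ i : L →ₗ[F] L)) (f g : ι → I) :
    mul (sumMap I σ f) (sumMap I σ g) =
      sumMap I σ fun i => ⟨mul (f i) (g i), hI.1 _ (f i).2 _⟩ := by
  simp only [sumMap_apply, map_sum, LinearMap.sum_apply]
  refine Finset.sum_congr rfl fun i _ => ?_
  rw [Finset.sum_eq_single i (fun j _ hji => ?_) (by simp), hσ i]
  exact (hI.map (hσ j)).mul_eq_zero halt (hI.map (hσ i)) (hinj.ne hji) ⟨_, (f j).2, rfl⟩
    ⟨_, (g i).2, rfl⟩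

end SumMap

theorem exists_linearEquiv_pi_isMinIdeal [Finite {K // IsMinIdeal mul K}]
    (halt : ∀ x : L, mul x x = 0) (hirr : IsIrredAlg mul) (hZ : LinearMap.ker mul = ⊥)
    (hind : sSupIndep {K | IsMinIdeal mul K}) (htop : sSup {K | IsMinIdeal mul K} = ⊤)
    {I : Submodule F L} (hI : IsMinIdeal mul I) :
    ∃ e : ({K // IsMinIdeal mul K} → I) ≃ₗ[F] L, ∀ f g,
      mul (e f) (e g) = e fun K => ⟨mul (f K) (g K), hI.1 _ (f K).2 _⟩ := by
  have := Fintype.ofFinite {K // IsMinIdeal mul K}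
  choose σ hσ hσI using fun K : {K // IsMinIdeal mul K} => hI.exists_map_eq halt hirr hZ K.2
  have hσI' : (fun K => I.map (σ K : L →ₗ[F] L)) = Subtype.val := funext hσI
  have hbij : Function.Bijective (sumMap I σ) := by
    refine sumMap_bijective (by rw [hσI']; exact (sSupIndep_iff _).1 hind) ?_
    rw [hσI']
    exact (sSup_eq_iSup' _).symm.trans htop
  exact ⟨.ofBijective _ hbij, sumMap_mul halt hI hσ (hσI' ▸ Subtype.val_injective)⟩

end

variable (F L) in
theorem exists_finrank_le_one_finrank_pi_eq [FiniteDimensional F L] :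
    ∃ ℓ, 0 < ℓ ∧ ∃ I : Submodule F L, Module.finrank F I ≤ 1 ∧
      Module.finrank F (Fin ℓ → I) = Module.finrank F L := by
  rcases subsingleton_or_nontrivial L with hL | hL
  · exact ⟨1, one_pos, ⊥, by simp, by simp [Module.finrank_zero_of_subsingleton]⟩
  · obtain ⟨v, hv⟩ := exists_ne (0 : L)
    exact ⟨Module.finrank F L, Module.finrank_pos, F ∙ v, (finrank_span_singleton hv).le,
      by rw [Module.finrank_pi_fintype]; simp [finrank_span_singleton hv]⟩

/-- A finite-dimensional anti-commutative algebra `L` on which `Aut(L)`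
acts irreducibly is isomorphic to a direct sum of `ℓ` copies of a simple
anti-commutative algebra `I` whose automorphism group acts irreducibly on `I`;
moreover, if `L` is non-abelian, `ℓ` is the number of minimal ideals of `L`. -/
theorem stmt9 (mul : L →ₗ[F] L →ₗ[F] L) [FiniteDimensional F L]
    (halt : ∀ x : L, mul x x = 0) (hirr : IsIrredAlg mul) :
    ∃ ℓ : ℕ, 0 < ℓ ∧
      ∃ (I : Submodule F L) (hcl : ∀ x ∈ I, ∀ y ∈ I, mul x y ∈ I),
        -- `I` (with the restricted product) is a simple algebra
        (∀ J : Submodule F L, J ≤ I → (∀ x ∈ J, ∀ y ∈ I, mul x y ∈ J) →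
          J = ⊥ ∨ J = I) ∧
        -- the automorphism group of `I` acts irreducibly on `I`
        (∀ W : Submodule F I,
          (∀ e : I ≃ₗ[F] I,
            (∀ x y : I,
              ((e ⟨mul x y, hcl _ x.2 _ y.2⟩ : I) : L) = mul (e x) (e y)) →
            W.map (e : I →ₗ[F] I) = W) → W = ⊥ ∨ W = ⊤) ∧
        -- `L ≅ I^{⊕ℓ}` as algebras (componentwise product on the left)
        (∃ e : (Fin ℓ → I) ≃ₗ[F] L, ∀ f g : Fin ℓ → I,
          mul (e f) (e g) =
            e (fun i => ⟨mul (f i) (g i), hcl _ (f i).2 _ (g i).2⟩)) ∧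
        -- if `L` is non-abelian then `ℓ` is the number of minimal ideals of `L`
        ((∃ x y : L, mul x y ≠ 0) →
          Nat.card {W : Submodule F L // IsMinIdeal mul W} = ℓ) := by
  by_cases hmul : mul = 0
  · subst hmul
    obtain ⟨ℓ, hℓ, I, hI, hdim⟩ := exists_finrank_le_one_finrank_pi_eq F L
    refine ⟨ℓ, hℓ, I, fun _ _ _ _ => I.zero_mem,
      fun J hJI _ => Submodule.eq_bot_or_eq_of_le_of_finrank_le_one hI hJI,
      fun W _ => ?_, ⟨.ofFinrankEq _ _ hdim, fun _ _ => ?_⟩, fun ⟨_, _, h⟩ => absurd rfl h⟩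
    · exact Submodule.eq_bot_or_eq_of_le_of_finrank_le_one (by rwa [finrank_top]) le_top
    · exact (map_zero _).symm
  have : Nontrivial L := (subsingleton_or_nontrivial L).resolve_left fun _ =>
    hmul (LinearMap.ext₂ fun _ _ => Subsingleton.elim _ _)
  obtain ⟨I, hI⟩ := exists_isMinIdeal mul
  have hZ := hirr.ker_eq_bot hmul
  have htop := hirr.sSup_isMinIdeal_eq_top hI
  have hind := sSupIndep_of_sSup_eq_top halt hZ (fun _ => id) htop
  have : Finite {K // IsMinIdeal mul K} := (WellFoundedGT.finite_of_sSupIndep hind).to_subtype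
  have : Nonempty {K // IsMinIdeal mul K} := ⟨⟨I, hI⟩⟩
  obtain ⟨e, he⟩ := exists_linearEquiv_pi_isMinIdeal halt hirr hZ hind htop hI
  have hcl : ∀ x ∈ I, ∀ y ∈ I, mul x y ∈ I := fun x hx y _ => hI.1 x hx y
  exact ⟨_, Nat.card_pos, I, hcl, fun J => hI.eq_bot_or_eq_of_le halt htop,
    fun W => hI.eq_bot_or_eq_top_of_forall_map_eq hirr hind hcl,
    ⟨(LinearEquiv.funCongrLeft F I (Finite.equivFin _)).trans e, fun f g => he _ _⟩, fun _ => rfl⟩
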